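/- Every monitoring edge-geodetic set of a graph G is a strong edge-geodetic set of G: given an MEG-set S, one can choose one shortest path for each pair of vertices of S so that the union of these paths covers all edges of G. -/
import Mathlib


open SimpleGraph

/-- Two vertices `x` and `y` monitor an edge `e` in `G`: there is a shortest path between
them, and `e` lies on every shortest path between `x` and `y`. -/
def Monitors {V : Type*} (G : SimpleGraph V) (x y : V) (e : Sym2 V) : Prop :=
  (∃ p : G.Walk x y, p.IsPath ∧ p.length = G.dist x y) ∧
    ∀ p : G.Walk x y, p.IsPath → p.length = G.dist x y → e ∈ p.edges

/-- `S` is a monitoring edge-geodetic set of `G`. -/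
def IsMEGSet {V : Type*} (G : SimpleGraph V) (S : Set V) : Prop :=
  ∀ e ∈ G.edgeSet, ∃ x ∈ S, ∃ y ∈ S, Monitors G x y e

/-- The minimum size of a monitoring edge-geodetic set of `G`. -/
noncomputable def megNum {V : Type*} (G : SimpleGraph V) : ℕ :=
  sInf {n | ∃ S : Set V, IsMEGSet G S ∧ S.ncard = n}

/-- The set of leaves (degree-1 vertices) of `G`. -/
def leaves {V : Type*} (G : SimpleGraph V) : Set V :=
  {v | (G.neighborSet v).ncard = 1}


theorem MEG_is_strong_edgeGeodetic {V : Type*} [Fintype V] (G : SimpleGraph V)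
    (hG : G.Connected) (S : Set V) (hS : IsMEGSet G S) :
    ∃ p : ∀ x y : V, G.Walk x y,
      (∀ x y, (p x y).IsPath ∧ (p x y).length = G.dist x y) ∧
      ∀ e ∈ G.edgeSet, ∃ x ∈ S, ∃ y ∈ S, e ∈ (p x y).edges := by
  have hex : ∀ x y : V, ∃ q : G.Walk x y, q.IsPath ∧ q.length = G.dist x y := by
    intro x y
    classical
    obtain ⟨w, hw⟩ := (hG x y).exists_walk_length_eq_dist
    refine ⟨w.bypass, w.bypass_isPath, le_antisymm ?_ (SimpleGraph.dist_le _)⟩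
    calc w.bypass.length ≤ w.length := SimpleGraph.Walk.length_bypass_le w
      _ = G.dist x y := hw
  choose p hp1 hp2 using hex
  refine ⟨p, fun x y => ⟨hp1 x y, hp2 x y⟩, ?_⟩
  intro e he
  obtain ⟨x, hx, y, hy, hm⟩ := hS e he
  exact ⟨x, hx, y, hy, hm.2 (p x y) (hp1 x y) (hp2 x y)⟩
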